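/- arXiv:2206.06261 — 5 statements merged into one kernel-verified Lean document; each statement's English description precedes it below -/
import Mathlib

section
/- Let F be a field and f ∈ F[X] an irreducible polynomial of positive degree. Let h₁, h₂ ∈ F[X] and suppose g₁, g₂ ∈ F[X] satisfy g₁·f + g₂·(h₁ + h₂) = 1. Let h₃ be the remainder of g₂·(h₁·h₂ + X) upon division by f. Then h₃·f ≡ g₁·f²·h₁ + g₂·(h₁·h₂·f + X·f) (mod f²), and deg(h₃·f) < deg(f²). -/
open Polynomial

/-- With Bézout cofactors `g₁·f + g₂·(h₁+h₂) = 1` and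
`h₃ = g₂·(h₁·h₂ + X) % f`, the pair `h₃·f` is congruent mod `f²` to the `v`-coordinate
`g₁·f²·h₁ + g₂·(h₁·h₂·f + X·f)` produced by Cantor's algorithm, and `deg(h₃·f) < deg(f²)`. -/
theorem nodal_add_cantor_v_congruence {F : Type*} [Field F] (f g₁ g₂ h₁ h₂ : F[X])
    (hf : Irreducible f) (hdeg : 0 < f.degree)
    (hbez : g₁ * f + g₂ * (h₁ + h₂) = 1) :
    f ^ 2 ∣ (g₂ * (h₁ * h₂ + X) % f) * f -
        (g₁ * f ^ 2 * h₁ + g₂ * (h₁ * h₂ * f + X * f)) ∧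
    ((g₂ * (h₁ * h₂ + X) % f) * f).degree < (f ^ 2).degree := by
  have hf0 : f ≠ 0 := fun h => by simp [h] at hdeg
  constructor
  · have key : g₂ * (h₁ * h₂ + X) % f =
        g₂ * (h₁ * h₂ + X) - f * (g₂ * (h₁ * h₂ + X) / f) := by
      rw [eq_sub_iff_add_eq, add_comm, EuclideanDomain.div_add_mod]
    refine ⟨-(g₁ * h₁ + g₂ * (h₁ * h₂ + X) / f), ?_⟩
    rw [key]; ring
  · rw [degree_mul, pow_two, degree_mul]
    exact WithBot.add_lt_add_right (fun h => hf0 (degree_eq_bot.mp h))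
      (EuclideanDomain.mod_lt _ hf0)
end

section
/- Let F be a field and f ∈ F[X] an irreducible polynomial. Let h₁, h₂ ∈ F[X] and suppose g₁, g₂ ∈ F[X] satisfy g₁·f + g₂·(h₁ + h₂) = 1. Let h₃ be the remainder of g₂·(h₁·h₂ + X) upon division by f. Then (X − h₃²)·(h₁ + h₂)² ≡ −(X − h₁²)·(X − h₂²) (mod f). -/
open Polynomial

/-- With Bézout cofactors `g₁·f + g₂·(h₁+h₂) = 1` and
`h₃ = g₂·(h₁·h₂ + X) % f`, one has `(X − h₃²)·(h₁+h₂)² ≡ −(X − h₁²)·(X − h₂²) (mod f)`. -/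
theorem nodal_add_norm_congruence {F : Type*} [Field F] (f g₁ g₂ h₁ h₂ : F[X])
    (hf : Irreducible f)
    (hbez : g₁ * f + g₂ * (h₁ + h₂) = 1) :
    f ∣ (X - (g₂ * (h₁ * h₂ + X) % f) ^ 2) * (h₁ + h₂) ^ 2 -
        (-((X - h₁ ^ 2) * (X - h₂ ^ 2))) := by
  have hd := EuclideanDomain.div_add_mod (g₂ * (h₁ * h₂ + X)) f
  set q := g₂ * (h₁ * h₂ + X) / f with hq
  set r := g₂ * (h₁ * h₂ + X) % f with hrdef
  set s : F[X] := g₁ * (h₁ * h₂ + X) + q * (h₁ + h₂) with hs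
  have hr : r * (h₁ + h₂) = (h₁ * h₂ + X) - f * s := by
    rw [hs]
    linear_combination (h₁ * h₂ + X) * hbez + (h₁ + h₂) * hd
  refine ⟨s * (2 * (h₁ * h₂ + X) - f * s), ?_⟩
  linear_combination (-(r * (h₁ + h₂) + ((h₁ * h₂ + X) - f * s))) * hr
end

section
/- Let F be a field and f ∈ F[X] an irreducible polynomial. Let h₁, h₂ ∈ F[X] and suppose g₁, g₂ ∈ F[X] satisfy g₁·f + g₂·(h₁ + h₂) = 1. Let h₃ be the remainder of g₂·(h₁·h₂ + X) upon division by f. If f is coprime to X − h₁² and f is coprime to X − h₂², then f is coprime to X − h₃². (That is, the addition algorithm on single-polynomial representatives of Jacobian elements of the nodal curve y² = X·f(X)² is closed: the output again represents an element of the Jacobian.) -/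
open Polynomial

/-- The addition algorithm is closed: if `f` is coprime to `X − h₁²` and to
`X − h₂²`, then `f` is coprime to `X − h₃²`, where `h₃ = g₂·(h₁·h₂ + X) % f` with Bézout
cofactors `g₁·f + g₂·(h₁+h₂) = 1`. -/
theorem nodal_add_closed {F : Type*} [Field F] (f g₁ g₂ h₁ h₂ : F[X])
    (hf : Irreducible f)
    (hbez : g₁ * f + g₂ * (h₁ + h₂) = 1)
    (hc1 : IsCoprime f (X - h₁ ^ 2)) (hc2 : IsCoprime f (X - h₂ ^ 2)) :
    IsCoprime f (X - (g₂ * (h₁ * h₂ + X) % f) ^ 2) := by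
  set A := g₂ * (h₁ * h₂ + X) with hA
  set q := A / f with hq
  have hr : A % f = A - f * q := eq_sub_of_add_eq' (EuclideanDomain.div_add_mod A f)
  have hg2 : IsCoprime f g₂ := by
    have : IsCoprime f (g₂ * (h₁ + h₂)) :=
      ⟨g₁, 1, by linear_combination hbez⟩
    exact this.of_mul_right_left
  have hC : IsCoprime f (g₂ ^ 2 * ((X - h₁ ^ 2) * (X - h₂ ^ 2))) :=
    (hg2.pow_right).mul_right (hc1.mul_right hc2)
  have key : X - (A % f) ^ 2 =
      -(g₂ ^ 2 * ((X - h₁ ^ 2) * (X - h₂ ^ 2))) +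
        f * (X * g₁ * (1 + g₂ * (h₁ + h₂)) + 2 * A * q - f * q ^ 2) := by
    rw [hr, hA]
    linear_combination (-(X : F[X]) * (1 + g₂ * (h₁ + h₂))) * hbez
  rw [key]
  exact (hC.neg_right).add_mul_left_right _
end

section
/- Let K be a field and α ∈ K. For t, s ∈ K with t + s ≠ 0 write t ∘ s = (t·s + α)/(t + s). Let t₁, t₂, t₃ ∈ K satisfy t₁ + t₂ ≠ 0, t₂ + t₃ ≠ 0, (t₁ ∘ t₂) + t₃ ≠ 0 and t₁ + (t₂ ∘ t₃) ≠ 0. Then (t₁ ∘ t₂) ∘ t₃ = t₁ ∘ (t₂ ∘ t₃), and both sides equal (t₁·t₂·t₃ + α·(t₁ + t₂ + t₃)) / (t₁·t₂ + t₁·t₃ + t₂·t₃ + α). -/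
/-- The partial group law `t ∘ s = (t·s + α)/(t + s)` on single-polynomial
representatives of elements of the Jacobian of a nodal curve. -/
noncomputable def circOp {K : Type*} [Field K] (α t s : K) : K := (t * s + α) / (t + s)

lemma circOp_div_left {K : Type*} [Field K] (α p q u : K) (hq : q ≠ 0) :
    circOp α (p / q) u = (p * u + α * q) / (p + u * q) := by
  unfold circOp
  rw [div_mul_eq_mul_div, div_add' _ _ _ hq, div_add' _ _ _ hq,
    div_div_div_cancel_right₀ hq]

lemma circOp_comm {K : Type*} [Field K] (α t s : K) : circOp α t s = circOp α s t := by
  unfold circOp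
  rw [mul_comm, add_comm t s]

/-- Associativity of the partial operation `t ∘ s = (t·s + α)/(t + s)`
away from the exceptional cases, and the common value of the two triple products. -/
theorem circOp_assoc {K : Type*} [Field K] (α t₁ t₂ t₃ : K)
    (h12 : t₁ + t₂ ≠ 0) (h23 : t₂ + t₃ ≠ 0)
    (hL : circOp α t₁ t₂ + t₃ ≠ 0) (hR : t₁ + circOp α t₂ t₃ ≠ 0) :
    circOp α (circOp α t₁ t₂) t₃ = circOp α t₁ (circOp α t₂ t₃) ∧
    circOp α (circOp α t₁ t₂) t₃ =
      (t₁ * t₂ * t₃ + α * (t₁ + t₂ + t₃)) / (t₁ * t₂ + t₁ * t₃ + t₂ * t₃ + α) := by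
  have key1 : circOp α (circOp α t₁ t₂) t₃ =
      (t₁ * t₂ * t₃ + α * (t₁ + t₂ + t₃)) / (t₁ * t₂ + t₁ * t₃ + t₂ * t₃ + α) := by
    rw [show circOp α t₁ t₂ = (t₁ * t₂ + α) / (t₁ + t₂) from rfl,
      circOp_div_left α _ _ _ h12]
    congr 1 <;> ring
  have key2 : circOp α t₁ (circOp α t₂ t₃) =
      (t₁ * t₂ * t₃ + α * (t₁ + t₂ + t₃)) / (t₁ * t₂ + t₁ * t₃ + t₂ * t₃ + α) := by
    rw [circOp_comm, show circOp α t₂ t₃ = (t₂ * t₃ + α) / (t₂ + t₃) from rfl,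
      circOp_div_left α _ _ _ h23]
    congr 1 <;> ring
  exact ⟨key1.trans key2.symm, key1⟩
end

section
/- Let L be a finite field of odd characteristic and K a subfield of L with |L| = |K|². Let q = |K| and let β ∈ L satisfy β² ∈ K and β ∉ K. Then the map t ↦ (t + β)/(t − β) is an injection from K into L whose image is exactly {u ∈ L : u^(q+1) = 1 and u ≠ 1}. Consequently the subgroup {u ∈ L : u^(q+1) = 1} of L^× has exactly q + 1 elements, and together with the extra value 1 (assigned to the point at infinity) the map gives a bijection from K ∪ {∞} onto this subgroup. -/
/-!
The `q`-power Frobenius `σ` is a ring endomorphism of `L` whose fixed points are exactly `K`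
(the roots of `X ^ q - X`), and `β ^ 2 ∈ K`, `β ∉ K` force `σ β = -β`. For `t` fixed by `σ`,
`u = (t + β) / (t - β)` has `σ u = (t - β) / (t + β) = u⁻¹`, so `u ^ (q + 1) = u * σ u = 1`;
conversely every `u ≠ 1` with `u * σ u = 1` is the image of `t = β (u + 1) / (u - 1)`, which
`σ` fixes. The map is injective since `2 β = β - σ β ≠ 0`, so the norm-one group is the image of
`K` together with `1` and has `q + 1` elements.
-/
open Polynomial

theorem Subfield.mem_iff_pow_card_eq_self {L : Type*} [Field L] (K : Subfield L) [Finite K]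
    {x : L} : x ∈ K ↔ x ^ Nat.card K = x := by
  have := Fintype.ofFinite K
  have hq := Fintype.one_lt_card (α := K)
  have hsplits : Splits (X ^ Fintype.card K - X : K[X]) := by
    rw [splits_iff_card_roots, FiniteField.roots_X_pow_card_sub_X, ← Finset.card_def,
      Finset.card_univ, FiniteField.X_pow_card_sub_X_natDegree_eq _ hq]
  have := FiniteField.roots_X_pow_card_sub_X K ▸ hsplits.roots_map K.subtype ▸
    Multiset.mem_map (b := x)
  simpa [sub_eq_zero, iff_comm, Nat.card_eq_fintype_card,
    FiniteField.X_pow_card_sub_X_ne_zero L hq] using this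

section Cayley

variable {L : Type*} [Field L] {σ : L →+* L} {β t u : L}

theorem map_eq_neg_of_map_sq_eq (hβ2 : σ (β ^ 2) = β ^ 2) (hβ : σ β ≠ β) : σ β = -β :=
  (sq_eq_sq_iff_eq_or_eq_neg.mp (by rwa [← map_pow])).resolve_left hβ

theorem sub_ne_zero_of_map_eq (hβ : σ β ≠ β) (ht : σ t = t) : t - β ≠ 0 :=
  sub_ne_zero.mpr fun h => hβ (h ▸ ht)

theorem add_ne_zero_of_map_eq (hβ : σ β ≠ β) (ht : σ t = t) : t + β ≠ 0 := by
  rw [Ne, add_eq_zero_iff_eq_neg]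
  rintro rfl
  exact hβ (neg_inj.mp (by rwa [← map_neg]))

theorem two_mul_ne_zero_of_map_eq_neg (hσβ : σ β = -β) (hβ : σ β ≠ β) : 2 * β ≠ 0 :=
  fun h => hβ (by linear_combination hσβ - h)

theorem injOn_cayley (hσβ : σ β = -β) (hβ : σ β ≠ β) :
    Set.InjOn (fun t : L => (t + β) / (t - β)) {t | σ t = t} := by
  intro s hs t ht hst
  rw [div_eq_div_iff (sub_ne_zero_of_map_eq hβ hs) (sub_ne_zero_of_map_eq hβ ht)] at hst
  have : 2 * β * (t - s) = 0 := by linear_combination hst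
  exact (sub_eq_zero.mp ((mul_eq_zero.mp this).resolve_left
    (two_mul_ne_zero_of_map_eq_neg hσβ hβ))).symm

theorem cayley_mul_map_eq_one (hσβ : σ β = -β) (hβ : σ β ≠ β) (ht : σ t = t) :
    (t + β) / (t - β) * σ ((t + β) / (t - β)) = 1 := by
  have := sub_ne_zero_of_map_eq hβ ht
  have := add_ne_zero_of_map_eq hβ ht
  rw [map_div₀, map_add, map_sub, ht, hσβ, ← sub_eq_add_neg, sub_neg_eq_add]
  field_simp

theorem cayley_ne_one (hσβ : σ β = -β) (hβ : σ β ≠ β) (ht : σ t = t) :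
    (t + β) / (t - β) ≠ 1 := by
  rw [Ne, div_eq_one_iff_eq (sub_ne_zero_of_map_eq hβ ht)]
  intro h
  exact hβ (by linear_combination hσβ - h)

theorem exists_cayley_eq (hσβ : σ β = -β) (hβ : σ β ≠ β) (hu : u * σ u = 1) (hu1 : u ≠ 1) :
    ∃ t, σ t = t ∧ (t + β) / (t - β) = u := by
  have hu0 : u ≠ 0 := by rintro rfl; simp at hu
  have hσu : σ u = u⁻¹ := eq_inv_of_mul_eq_one_right hu
  have hu_sub : u - 1 ≠ 0 := sub_ne_zero.mpr hu1
  have ht : σ (β * (u + 1) / (u - 1)) = β * (u + 1) / (u - 1) := by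
    rw [map_div₀, map_mul, map_add, map_sub, map_one, hσβ, hσu]
    field_simp
    ring
  refine ⟨_, ht, ?_⟩
  rw [div_eq_iff (sub_ne_zero_of_map_eq hβ ht)]
  field_simp
  ring

theorem image_cayley (hσβ : σ β = -β) (hβ : σ β ≠ β) :
    (fun t : L => (t + β) / (t - β)) '' {t | σ t = t} = {u | u * σ u = 1 ∧ u ≠ 1} := by
  ext u
  constructor
  · rintro ⟨t, ht, rfl⟩
    exact ⟨cayley_mul_map_eq_one hσβ hβ ht, cayley_ne_one hσβ hβ ht⟩
  · rintro ⟨hu, hu1⟩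
    obtain ⟨t, ht, rfl⟩ := exists_cayley_eq hσβ hβ hu hu1
    exact ⟨t, ht, rfl⟩

end Cayley

theorem torus_map_image_norm_one_general {L : Type*} [Field L] [Finite L]
    (K : Subfield L) (q : ℕ) (hq : Nat.card K = q)
    (β : L) (hβ2 : β ^ 2 ∈ K) (hβ : β ∉ K) :
    Set.InjOn (fun t : L => (t + β) / (t - β)) (K : Set L) ∧
    (fun t : L => (t + β) / (t - β)) '' (K : Set L) =
      {u : L | u ^ (q + 1) = 1 ∧ u ≠ 1} ∧
    {u : L | u ^ (q + 1) = 1}.ncard = q + 1 ∧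
    (fun t : L => (t + β) / (t - β)) '' (K : Set L) ∪ {1} =
      {u : L | u ^ (q + 1) = 1} := by
  have := Fintype.ofFinite K
  let σ : L →+* L := FiniteField.frobeniusAlgHom K L
  have hσ (x : L) : σ x = x ^ q := by
    rw [← hq, Nat.card_eq_fintype_card]
    rfl
  have hfix (x : L) : x ∈ K ↔ σ x = x := by rw [K.mem_iff_pow_card_eq_self, hq, hσ]
  have hσβ_ne : σ β ≠ β := fun h => hβ ((hfix β).mpr h)
  have hσβ : σ β = -β := map_eq_neg_of_map_sq_eq ((hfix _).mp hβ2) hσβ_ne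
  have hK : (K : Set L) = {t | σ t = t} := Set.ext hfix
  have hinj := hK ▸ injOn_cayley hσβ hσβ_ne
  have himage : (fun t : L => (t + β) / (t - β)) '' (K : Set L) =
      {u : L | u ^ (q + 1) = 1 ∧ u ≠ 1} := by
    simp_rw [hK, image_cayley hσβ hσβ_ne, pow_succ', hσ]
  have hunion : (fun t : L => (t + β) / (t - β)) '' (K : Set L) ∪ {1} =
      {u : L | u ^ (q + 1) = 1} := by
    ext u
    by_cases hu : u = 1 <;> simp [himage, hu]
  refine ⟨hinj, himage, ?_, hunion⟩
  rw [← hunion, Set.union_singleton, Set.ncard_insert_of_notMem (by simp [himage]),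
    hinj.ncard_image, ← Nat.card_coe_set_eq, SetLike.coe_sort_coe, hq]

/-- Let `L` be a finite field of odd characteristic and `K` a subfield with
`|L| = |K|² = q²`, and let `β ∈ L` satisfy `β² ∈ K` and `β ∉ K`. Then `t ↦ (t+β)/(t−β)`
is injective on `K`, its image is exactly `{u : u^(q+1) = 1, u ≠ 1}`, the norm-one
subgroup `{u : u^(q+1) = 1}` has exactly `q + 1` elements, and adjoining the extra value
`1` (assigned to the point at infinity) the image fills the whole norm-one subgroup. -/
theorem torus_map_image_norm_one {L : Type*} [Field L] [Finite L]
    (hodd : Odd (ringChar L)) (K : Subfield L) (q : ℕ) (hq : Nat.card K = q)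
    (hcard : Nat.card L = q ^ 2) (β : L) (hβ2 : β ^ 2 ∈ K) (hβ : β ∉ K) :
    Set.InjOn (fun t : L => (t + β) / (t - β)) (K : Set L) ∧
    (fun t : L => (t + β) / (t - β)) '' (K : Set L) =
      {u : L | u ^ (q + 1) = 1 ∧ u ≠ 1} ∧
    {u : L | u ^ (q + 1) = 1}.ncard = q + 1 ∧
    (fun t : L => (t + β) / (t - β)) '' (K : Set L) ∪ {1} =
      {u : L | u ^ (q + 1) = 1} :=
  torus_map_image_norm_one_general K q hq β hβ2 hβ
end
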